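/- Let C be a 3×3 unitary matrix with entries a^{(i,j)} and λ ∈ ℝ such that a^{(1,1)} e^{iλ} − det(C) · conj(a^{(3,3)}) ≠ 0. Then the transfer matrix T(λ) satisfies |det T(λ)| = 1. -/

import Mathlib

/-! For a unitary `C`, `det C • Cᴴ = adj C`, so `det C` times any conjugated entry of `C` is a
2×2 minor of `C`. Substituting these minors (and `e^{-iλ} = conj e^{iλ}`) into the 2×2 determinant
of the transfer matrix, its numerator factors as `-e^{iλ} (det C · conj d) d`, where `d` is the
denominator. Hence `det T(λ) = -e^{iλ} det C · conj d / d`, a product of numbers of modulus one. -/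

open Complex Matrix ComplexConjugate

noncomputable section

/-- The transfer matrix `T(λ)` of a 3×3 coin matrix `M`. -/
def transfer (M : Matrix (Fin 3) (Fin 3) ℂ) (lam : ℝ) : Matrix (Fin 2) (Fin 2) ℂ :=
  (M 0 0 * Complex.exp (lam * Complex.I) - M.det * conj (M 2 2))⁻¹ •
    !![Complex.exp (lam * Complex.I) * (Complex.exp (lam * Complex.I) - M 1 1),
        -(M 0 2 * Complex.exp (lam * Complex.I)) - M.det * conj (M 2 0);
        M 2 0 * Complex.exp (lam * Complex.I) + M.det * conj (M 0 2),
        -(M.det * (Complex.exp (-(lam * Complex.I)) - conj (M 1 1)))]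

namespace Matrix

variable {n R : Type*} [Fintype n] [DecidableEq n] [CommRing R] [StarRing R]

theorem adjugate_eq_det_smul_conjTranspose_of_mem_unitaryGroup {M : Matrix n n R}
    (hM : M ∈ unitaryGroup n R) : M.adjugate = M.det • Mᴴ := by
  have hMH : M * Mᴴ = 1 := mem_unitaryGroup_iff.mp hM
  calc M.adjugate = M.adjugate * (M * Mᴴ) := by rw [hMH, mul_one]
    _ = M.det • Mᴴ := by rw [← mul_assoc, adjugate_mul, smul_mul, one_mul]

theorem det_mul_star_apply_of_mem_unitaryGroup {M : Matrix n n R}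
    (hM : M ∈ unitaryGroup n R) (i j : n) : M.det * star (M i j) = M.adjugate j i := by
  simp [adjugate_eq_det_smul_conjTranspose_of_mem_unitaryGroup hM]

end Matrix

theorem transfer_det_numerator_eq {M : Matrix (Fin 3) (Fin 3) ℂ}
    (hM : M ∈ unitaryGroup (Fin 3) ℂ) {z : ℂ} (hz : conj z * z = 1) :
    z * (z - M 1 1) * -(M.det * (conj z - conj (M 1 1)))
        - (-(M 0 2 * z) - M.det * conj (M 2 0)) * (M 2 0 * z + M.det * conj (M 0 2))
      = -(z * (M.det * conj (M 0 0 * z - M.det * conj (M 2 2))) *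
          (M 0 0 * z - M.det * conj (M 2 2))) := by
  have hD : M.det * conj M.det = 1 := (det_of_mem_unitary hM).2
  have cof (i j : Fin 3) : M.det * conj (M i j) = M.adjugate j i :=
    det_mul_star_apply_of_mem_unitaryGroup hM i j
  have h00 : M.det * conj (M 0 0) = M 1 1 * M 2 2 - M 1 2 * M 2 1 := by
    simp [cof, adjugate_fin_three]
  have h11 : M.det * conj (M 1 1) = M 0 0 * M 2 2 - M 0 2 * M 2 0 := by
    simp [cof, adjugate_fin_three]
  have h22 : M.det * conj (M 2 2) = M 0 0 * M 1 1 - M 0 1 * M 1 0 := by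
    simp [cof, adjugate_fin_three]
  have h20 : M.det * conj (M 2 0) = M 0 1 * M 1 2 - M 0 2 * M 1 1 := by
    simp [cof, adjugate_fin_three]
  have h02 : M.det * conj (M 0 2) = M 1 0 * M 2 1 - M 1 1 * M 2 0 := by
    simp [cof, adjugate_fin_three]
  have hDd : M.det * conj (M 0 0 * z - M.det * conj (M 2 2))
      = (M 1 1 * M 2 2 - M 1 2 * M 2 1) * conj z - M 2 2 := by
    simp only [map_sub, map_mul, conj_conj]
    linear_combination conj z * h00 - M 2 2 * hD
  rw [hDd, h22, h20, h02, mul_sub M.det, h11]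
  linear_combination
    ((M 1 1 * M 2 2 - M 1 2 * M 2 1) * (M 0 0 * z - (M 0 0 * M 1 1 - M 0 1 * M 1 0))
      - (z - M 1 1) * M.det) * hz - (z - M 1 1) * det_fin_three M

def transferDenom (M : Matrix (Fin 3) (Fin 3) ℂ) (lam : ℝ) : ℂ :=
  M 0 0 * exp (lam * I) - M.det * conj (M 2 2)

theorem det_transfer {M : Matrix (Fin 3) (Fin 3) ℂ} (hM : M ∈ unitaryGroup (Fin 3) ℂ)
    {lam : ℝ} (hden : transferDenom M lam ≠ 0) :
    (transfer M lam).det =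
      -(exp (lam * I) * (M.det * conj (transferDenom M lam)) / transferDenom M lam) := by
  unfold transferDenom at *
  have hconj : conj (exp (lam * I)) = exp (-(lam * I)) := by
    rw [← exp_conj, map_mul, conj_ofReal, conj_I, mul_neg]
  have hunit : conj (exp (lam * I)) * exp (lam * I) = 1 := by
    rw [conj_mul', norm_exp_ofReal_mul_I, ofReal_one, one_pow]
  rw [transfer, det_smul, Fintype.card_fin, det_fin_two_of, ← hconj,
    transfer_det_numerator_eq hM hunit]
  field_simp

/-- for a 3×3 unitary coin `M` and `λ ∈ ℝ` with
`a^{(1,1)} e^{iλ} − det C ⬝ conj a^{(3,3)} ≠ 0`, the transfer matrix has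
determinant of modulus 1. -/
theorem abs_det_transfer_eq_one (M : Matrix (Fin 3) (Fin 3) ℂ)
    (hM : M ∈ Matrix.unitaryGroup (Fin 3) ℂ) (lam : ℝ)
    (hden : M 0 0 * Complex.exp (lam * Complex.I) - M.det * conj (M 2 2) ≠ 0) :
    ‖(transfer M lam).det‖ = 1 := by
  have hd : transferDenom M lam ≠ 0 := hden
  have hdet : ‖M.det‖ = 1 := CStarRing.norm_of_mem_unitary (det_of_mem_unitary hM)
  rw [det_transfer hM hd, norm_neg, norm_div, norm_mul, norm_mul, norm_exp_ofReal_mul_I, hdet,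
    RCLike.norm_conj, one_mul, one_mul, div_self (norm_ne_zero_iff.mpr hd)]
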